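/- A pseudo equality algebra A is commutative if and only if for all x, y ∈ A: x∧y ∼ x = y ∼ ((x∧y∼y)∽x) and x ∽ x∧y = (x∼(y∽x∧y))∽y. -/
import Mathlib


/-- A pseudo equality algebra (JK-algebra). -/
structure PEA (A : Type*) where
  meet : A → A → A
  sim : A → A → A      -- x ∼ y
  bsim : A → A → A     -- x ∽ y
  one : A
  meet_comm : ∀ x y, meet x y = meet y x
  meet_assoc : ∀ x y z, meet (meet x y) z = meet x (meet y z)
  meet_idem : ∀ x, meet x x = x
  meet_one : ∀ x, meet x one = x                      -- 1 is top
  sim_self : ∀ x, sim x x = one                       -- (A2)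
  bsim_self : ∀ x, bsim x x = one
  sim_one : ∀ x, sim x one = x                        -- (A3)
  one_bsim : ∀ x, bsim one x = x
  A4a : ∀ x y z, meet x y = x → meet y z = y → meet (sim x z) (sim y z) = sim x z
  A4b : ∀ x y z, meet x y = x → meet y z = y → meet (sim x z) (sim x y) = sim x z
  A4c : ∀ x y z, meet x y = x → meet y z = y → meet (bsim z x) (bsim z y) = bsim z x
  A4d : ∀ x y z, meet x y = x → meet y z = y → meet (bsim z x) (bsim y x) = bsim z x
  A5a : ∀ x y z, meet (sim x y) (sim (meet x z) (meet y z)) = sim x y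
  A5b : ∀ x y z, meet (bsim x y) (bsim (meet x z) (meet y z)) = bsim x y
  A6a : ∀ x y z, meet (sim x y) (bsim (sim z x) (sim z y)) = sim x y
  A6b : ∀ x y z, meet (bsim x y) (sim (bsim x z) (bsim y z)) = bsim x y
  A7a : ∀ x y z, meet (sim x y) (sim (sim x z) (sim y z)) = sim x y
  A7b : ∀ x y z, meet (bsim x y) (bsim (bsim z x) (bsim z y)) = bsim x y

namespace PEA

variable {A : Type*}

/-- The induced order: x ≤ y iff x ∧ y = x. -/
def le (P : PEA A) (x y : A) : Prop := P.meet x y = x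

/-- x ∨₁ y = (x∧y ∼ x) ∽ y. -/
def v1 (P : PEA A) (x y : A) : A := P.bsim (P.sim (P.meet x y) x) y

/-- x ∨₂ y = y ∼ (x ∽ x∧y). -/
def v2 (P : PEA A) (x y : A) : A := P.sim y (P.bsim x (P.meet x y))

/-- x → y = x∧y ∼ x. -/
def arrow (P : PEA A) (x y : A) : A := P.sim (P.meet x y) x

/-- x ⇝ y = x ∽ x∧y. -/
def squig (P : PEA A) (x y : A) : A := P.bsim x (P.meet x y)

/-- Invariance: x∧y ∼ y = x ∼ y and x ∽ x∧y = x ∽ y. -/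
def Invariant (P : PEA A) : Prop :=
  ∀ x y, P.sim (P.meet x y) y = P.sim x y ∧ P.bsim x (P.meet x y) = P.bsim x y

/-- Commutativity: (x∧y∼x)∽y = (x∧y∼y)∽x and y∼(x∽x∧y) = x∼(y∽x∧y). -/
def Commutative (P : PEA A) : Prop :=
  ∀ x y, P.bsim (P.sim (P.meet x y) x) y = P.bsim (P.sim (P.meet x y) y) x ∧
    P.sim y (P.bsim x (P.meet x y)) = P.sim x (P.bsim y (P.meet x y))

/-- D is an upset. -/
def IsUpset (P : PEA A) (D : Set A) : Prop := ∀ x y, x ∈ D → P.le x y → y ∈ D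

/-- Deductive system. -/
def IsDS (P : PEA A) (D : Set A) : Prop :=
  P.one ∈ D ∧ P.IsUpset D ∧ ∀ x y, x ∈ D → P.sim y x ∈ D → y ∈ D

/-- Commutative deductive system. -/
def IsCommDS (P : PEA A) (D : Set A) : Prop :=
  P.IsDS D ∧
  (∀ x y, P.sim (P.meet x y) y ∈ D → P.sim x (P.bsim (P.sim (P.meet x y) x) y) ∈ D) ∧
  (∀ x y, P.bsim y (P.meet x y) ∈ D → P.bsim (P.sim y (P.bsim x (P.meet x y))) x ∈ D)

/-- Normal deductive system. -/
def IsNormalDS (P : PEA A) (D : Set A) : Prop :=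
  P.IsDS D ∧ ∀ x y, (P.sim x y ∈ D ∧ P.sim y x ∈ D) ↔ (P.bsim y x ∈ D ∧ P.bsim x y ∈ D)

/-- Measure: m(y∼x) = m(x∽y) = m(y) − m(x) whenever y ≤ x, with values in [0,∞). -/
def IsMeasure (P : PEA A) (m : A → ℝ) : Prop :=
  (∀ x, 0 ≤ m x) ∧
  ∀ x y, P.le y x → m (P.sim y x) = m y - m x ∧ m (P.bsim x y) = m y - m x

variable (P : PEA A)

lemma le_trans' {x y z : A} (h1 : P.le x y) (h2 : P.le y z) : P.le x z := by
  unfold le at *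
  rw [← h1, P.meet_assoc, h2]

lemma le_antisymm' {x y : A} (h1 : P.le x y) (h2 : P.le y x) : x = y := by
  unfold le at *
  rw [← h1, P.meet_comm, h2]

lemma meet_le_left (x y : A) : P.le (P.meet x y) x := by
  unfold le
  rw [P.meet_comm (P.meet x y) x, ← P.meet_assoc, P.meet_idem]

lemma meet_le_right (x y : A) : P.le (P.meet x y) y := by
  unfold le
  rw [P.meet_assoc, P.meet_idem]

/-- x ≤ (z∼x)∽z. -/
lemma le_bsim_sim (x z : A) : P.le x (P.bsim (P.sim z x) z) := by
  have h := P.A6a x P.one z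
  rwa [P.sim_one, P.sim_one] at h

/-- x ≤ z∼(x∽z). -/
lemma le_sim_bsim (x z : A) : P.le x (P.sim z (P.bsim x z)) := by
  have h := P.A6b P.one x z
  rwa [P.one_bsim, P.one_bsim] at h

lemma le_of_sim_one {p q : A} (h : P.sim p q = P.one) : P.le q p := by
  have h2 := P.le_bsim_sim q p
  rwa [h, P.one_bsim] at h2

lemma le_of_bsim_one {p q : A} (h : P.bsim p q = P.one) : P.le p q := by
  have h2 := P.le_sim_bsim p q
  rwa [h, P.sim_one] at h2

/-- x ≤ (x∧y)∼y. -/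
lemma le_sim_meet (x y : A) : P.le x (P.sim (P.meet x y) y) := by
  have h := P.A5a x P.one y
  rwa [P.sim_one, P.meet_comm P.one y, P.meet_one] at h

/-- x ≤ y∽(x∧y). -/
lemma le_bsim_meet (x y : A) : P.le x (P.bsim y (P.meet x y)) := by
  have h := P.A5b P.one x y
  rwa [P.one_bsim, P.meet_comm P.one y, P.meet_one] at h

/-- L1: y∼((x∧y∼x)∽y) = x∧y∼x. -/
lemma L1 (x y : A) :
    P.sim y (P.bsim (P.sim (P.meet x y) x) y) = P.sim (P.meet x y) x := by
  have hye : P.le y (P.sim (P.meet x y) x) := by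
    have h := P.le_sim_meet y x
    rwa [P.meet_comm y x] at h
  have hxu : P.le x (P.bsim (P.sim (P.meet x y) x) y) := by
    have h1 : P.le x (P.bsim (P.sim (P.meet x y) x) (P.meet x y)) := by
      have h := P.A6a x P.one (P.meet x y)
      rwa [P.sim_one, P.sim_one] at h
    have h2 := P.A4c (P.meet x y) y (P.sim (P.meet x y) x) (P.meet_le_right x y) hye
    exact P.le_trans' h1 h2
  apply P.le_antisymm'
  · have h := P.A5a y (P.bsim (P.sim (P.meet x y) x) y) x
    have hux : P.meet (P.bsim (P.sim (P.meet x y) x) y) x = x := by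
      rw [P.meet_comm]; exact hxu
    rwa [P.meet_comm y x, hux] at h
  · exact P.le_sim_bsim (P.sim (P.meet x y) x) y

/-- L2: (y∼(x∽x∧y))∽y = x∽x∧y. -/
lemma L2 (x y : A) :
    P.bsim (P.sim y (P.bsim x (P.meet x y))) y = P.bsim x (P.meet x y) := by
  have hyf : P.le y (P.bsim x (P.meet x y)) := by
    have h := P.A5b P.one y x
    rwa [P.one_bsim, P.meet_comm P.one x, P.meet_one, P.meet_comm y x] at h
  have hxv : P.le x (P.sim y (P.bsim x (P.meet x y))) := by
    have h1 : P.le x (P.sim (P.meet x y) (P.bsim x (P.meet x y))) := by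
      have h := P.A6b P.one x (P.meet x y)
      rwa [P.one_bsim, P.one_bsim] at h
    have h2 := P.A4a (P.meet x y) y (P.bsim x (P.meet x y)) (P.meet_le_right x y) hyf
    exact P.le_trans' h1 h2
  apply P.le_antisymm'
  · have h := P.A5b (P.sim y (P.bsim x (P.meet x y))) y x
    have hvx : P.meet (P.sim y (P.bsim x (P.meet x y))) x = x := by
      rw [P.meet_comm]; exact hxv
    rwa [P.meet_comm y x, hvx] at h
  · exact P.le_bsim_sim (P.bsim x (P.meet x y)) y

end PEA

theorem stmt7 {A : Type*} (P : PEA A) :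
    P.Commutative ↔
      ∀ x y, P.sim (P.meet x y) x = P.sim y (P.bsim (P.sim (P.meet x y) y) x) ∧
        P.bsim x (P.meet x y) = P.bsim (P.sim x (P.bsim y (P.meet x y))) y := by
  constructor
  · intro hc x y
    obtain ⟨c1, c2⟩ := hc x y
    constructor
    · rw [← c1, P.L1]
    · rw [← c2, P.L2]
  · intro h
    have key1 : ∀ x y : A,
        P.le (P.bsim (P.sim (P.meet x y) x) y) (P.bsim (P.sim (P.meet x y) y) x) := by
      intro x y
      have hyb : P.le y (P.bsim (P.sim (P.meet x y) y) x) := by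
        have hxq : P.le x (P.sim (P.meet x y) y) := P.le_sim_meet x y
        have h1 : P.le y (P.bsim (P.sim (P.meet x y) y) (P.meet x y)) := by
          have h := P.A6a y P.one (P.meet x y)
          rwa [P.sim_one, P.sim_one] at h
        have h2 := P.A4c (P.meet x y) x (P.sim (P.meet x y) y) (P.meet_le_left x y) hxq
        exact P.le_trans' h1 h2
      have hyb' : P.meet y (P.bsim (P.sim (P.meet x y) y) x) = y := hyb
      have e1 := (h y (P.bsim (P.sim (P.meet x y) y) x)).1
      rw [hyb', P.sim_self] at e1
      have e2 := (h x y).1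
      rw [e2]
      exact P.le_of_sim_one e1.symm
    have key2 : ∀ x y : A,
        P.le (P.sim y (P.bsim x (P.meet x y))) (P.sim x (P.bsim y (P.meet x y))) := by
      intro x y
      have hyd : P.le y (P.sim x (P.bsim y (P.meet x y))) := by
        have hxf : P.le x (P.bsim y (P.meet x y)) := P.le_bsim_meet x y
        have h1 : P.le y (P.sim (P.meet x y) (P.bsim y (P.meet x y))) := by
          have h := P.A6b P.one y (P.meet x y)
          rwa [P.one_bsim, P.one_bsim] at h
        have h2 := P.A4a (P.meet x y) x (P.bsim y (P.meet x y)) (P.meet_le_left x y) hxf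
        exact P.le_trans' h1 h2
      have hyd' : P.meet y (P.sim x (P.bsim y (P.meet x y))) = y := hyd
      have e1 := (h y (P.sim x (P.bsim y (P.meet x y)))).2
      rw [hyd', P.bsim_self] at e1
      have e2 := (h x y).2
      rw [e2]
      exact P.le_of_bsim_one e1.symm
    intro x y
    constructor
    · refine P.le_antisymm' (key1 x y) ?_
      have h := key1 y x
      rwa [P.meet_comm y x] at h
    · refine P.le_antisymm' (key2 x y) ?_
      have h := key2 y x
      rwa [P.meet_comm y x] at h
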